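/- Let v₁ be a valuation on a field K and v₂ a valuation on the residue field Kv₁, and let v = v₂ ∘ v₁ be the composed valuation on K (whose valuation ring is the preimage in O_{v₁} of O_{v₂}). If both v₁ and v₂ are n≤-henselian, then v is n≤-henselian. -/

import Mathlib

/-!
Let `φ : O_v → O_{v₂}` be the residue map of `v₁` restricted to `O_v`. Simple roots lift along `φ`:
they lift along the residue map of `v₁`, and `O_v` is the full preimage of `O_{v₂}` under it.
Composing with the residue map of `v₂`, they lift along `O_v → Kv₂`. As `φ` is surjective, hence
local, this composite is the residue map of `v` followed by a field embedding `Kv → Kv₂`, which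
is injective, so the lifted root also reduces to the given root in `Kv`.
-/

/-- A valued field `(K, O)` is `n≤`-henselian if every monic polynomial over `O` of degree
at most `n` whose reduction has a simple zero in the residue field admits a root in `O`
lifting that zero. -/
def NLeHenselian (n : ℕ) {K : Type*} [Field K] (O : ValuationSubring K) : Prop :=
  ∀ f : Polynomial O, f.Monic → f.natDegree ≤ n →
    ∀ a : IsLocalRing.ResidueField O,
      (f.map (IsLocalRing.residue O)).IsRoot a →
      ¬ (Polynomial.derivative (f.map (IsLocalRing.residue O))).IsRoot a →
      ∃ x : O, f.IsRoot x ∧ IsLocalRing.residue O x = a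

open Polynomial

def LiftsSimpleRoots (n : ℕ) {A B : Type*} [CommRing A] [CommRing B] (π : A →+* B) : Prop :=
  ∀ f : A[X], f.Monic → f.natDegree ≤ n → ∀ b : B,
    (f.map π).IsRoot b → ¬ (derivative (f.map π)).IsRoot b → ∃ x : A, f.IsRoot x ∧ π x = b

theorem nLeHenselian_iff_liftsSimpleRoots (n : ℕ) {K : Type*} [Field K] (O : ValuationSubring K) :
    NLeHenselian n O ↔ LiftsSimpleRoots n (IsLocalRing.residue O) :=
  Iff.rfl

namespace LiftsSimpleRoots

variable {n : ℕ} {A B C R S : Type*} [CommRing A] [CommRing B] [CommRing C] [CommRing R]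
  [CommRing S]

theorem comp {π₁ : A →+* B} {π₂ : B →+* C} (h₂ : LiftsSimpleRoots n π₂)
    (h₁ : LiftsSimpleRoots n π₁) : LiftsSimpleRoots n (π₂.comp π₁) := by
  intro f hf hdeg c hc hc'
  rw [← map_map] at hc hc'
  obtain ⟨b, hb, rfl⟩ :=
    h₂ (f.map π₁) (hf.map π₁) (natDegree_map_le.trans hdeg) c hc hc'
  have hb' : ¬ (derivative (f.map π₁)).IsRoot b := fun h ↦ hc' (by
    rw [derivative_map]
    exact h.map)
  obtain ⟨x, hx, rfl⟩ := h₁ f hf hdeg b hb hb'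
  exact ⟨x, hx, rfl⟩

theorem of_pullback {π : A →+* B} {ι : R →+* A} {ρ : R →+* S} {σ : S →+* B}
    (hsq : π.comp ι = σ.comp ρ) (hι : Function.Injective ι) (hσ : Function.Injective σ)
    (hpull : ∀ a, π a ∈ σ.range → a ∈ ι.range) (h : LiftsSimpleRoots n π) :
    LiftsSimpleRoots n ρ := by
  intro f hf hdeg s hs hs'
  have hmap : (f.map ι).map π = (f.map ρ).map σ := by rw [map_map, map_map, hsq]
  obtain ⟨a, ha, has⟩ := h (f.map ι) (hf.map ι) (natDegree_map_le.trans hdeg) (σ s)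
    (by rw [hmap]; exact hs.map)
    (by rw [hmap, derivative_map, isRoot_map_iff hσ]; exact hs')
  obtain ⟨r, rfl⟩ := hpull _ ⟨s, has.symm⟩
  refine ⟨r, (isRoot_map_iff hι).mp ha, hσ ?_⟩
  rw [← RingHom.comp_apply, ← hsq, RingHom.comp_apply, has]

theorem of_comp {ρ : R →+* S} {σ : S →+* B} (h : LiftsSimpleRoots n (σ.comp ρ))
    (hσ : Function.Injective σ) : LiftsSimpleRoots n ρ :=
  h.of_pullback (ι := RingHom.id R) rfl Function.injective_id hσ fun a _ ↦ ⟨a, rfl⟩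

end LiftsSimpleRoots

namespace ValuationSubring

variable {K : Type*} [Field K] {v₁ : ValuationSubring K}
  {v₂ : ValuationSubring (IsLocalRing.ResidueField v₁)} {v : ValuationSubring K}

theorem le_of_mem_comp
    (hcomp : ∀ x : K, x ∈ v ↔ ∃ h : x ∈ v₁, IsLocalRing.residue v₁ ⟨x, h⟩ ∈ v₂) : v ≤ v₁ :=
  fun x hx ↦ ((hcomp x).1 hx).1

variable (hcomp : ∀ x : K, x ∈ v ↔ ∃ h : x ∈ v₁, IsLocalRing.residue v₁ ⟨x, h⟩ ∈ v₂)

noncomputable def compResidue : v →+* v₂ :=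
  ((IsLocalRing.residue v₁).comp (v.inclusion v₁ (le_of_mem_comp hcomp))).codRestrict v₂
    fun x ↦ ((hcomp x).1 x.2).2

theorem compResidue_surjective :
    Function.Surjective (compResidue hcomp) := by
  rintro ⟨z, hz⟩
  obtain ⟨w, rfl⟩ := IsLocalRing.residue_surjective z
  exact ⟨⟨w, (hcomp w).2 ⟨w.2, hz⟩⟩, rfl⟩

theorem liftsSimpleRoots_compResidue {n : ℕ} (h₁ : NLeHenselian n v₁) :
    LiftsSimpleRoots n (compResidue hcomp) :=
  LiftsSimpleRoots.of_pullback (ι := v.inclusion v₁ (le_of_mem_comp hcomp)) (σ := v₂.subtype)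
    rfl (Subring.inclusion_injective _) v₂.subtype_injective
    (fun a ⟨z, hz⟩ ↦ ⟨⟨a, (hcomp a).2 ⟨a.2, hz ▸ z.2⟩⟩, rfl⟩)
    ((nLeHenselian_iff_liftsSimpleRoots n v₁).mp h₁)

end ValuationSubring

/-- if `v₁` is a valuation on `K` and `v₂` a valuation on its residue field,
and `v` is the composed valuation (whose valuation ring is the preimage in `O_{v₁}` of
`O_{v₂}` under the residue map), then `v` is `n≤`-henselian whenever both `v₁` and `v₂`
are. -/
theorem nLeHenselian_comp (n : ℕ) {K : Type*} [Field K]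
    (v₁ : ValuationSubring K)
    (v₂ : ValuationSubring (IsLocalRing.ResidueField v₁))
    (v : ValuationSubring K)
    (hcomp : ∀ x : K, x ∈ v ↔ ∃ h : x ∈ v₁, IsLocalRing.residue v₁ ⟨x, h⟩ ∈ v₂)
    (h₁ : NLeHenselian n v₁) (h₂ : NLeHenselian n v₂) :
    NLeHenselian n v := by
  have := IsLocalHom.of_surjective _ (ValuationSubring.compResidue_surjective hcomp)
  have h := ((nLeHenselian_iff_liftsSimpleRoots n v₂).mp h₂).comp
    (ValuationSubring.liftsSimpleRoots_compResidue hcomp h₁)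
  rw [← IsLocalRing.ResidueField.map_comp_residue] at h
  exact h.of_comp (IsLocalRing.ResidueField.map _).injective
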